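/- Let (X_1,…,X_n) be an H-frame on an open neighborhood U of 0 in ℝⁿ such that the identity coordinates are privileged coordinates at 0 adapted to (X_1,…,X_n), i.e., X_j(0) = e_j for all j and each coordinate function x ↦ x_k has order w_k at 0. If f is a smooth function defined near 0 which has order N at 0 with respect to (X_1,…,X_n), then f has weight N. -/

import Mathlib

open scoped BigOperators
open Filter Topology

namespace Carnot

/-- Anisotropic dilation `t · x = (t^{w_1} x_1, …, t^{w_n} x_n)`. -/
def dil {n : ℕ} (w : Fin n → ℕ) (t : ℝ) (x : Fin n → ℝ) : Fin n → ℝ :=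
  fun i => t ^ (w i) * x i

/-- Weighted length `⟨α⟩` of a multi-index. -/
def wlen {n : ℕ} (w : Fin n → ℕ) (α : Fin n → ℕ) : ℕ := ∑ i, w i * α i

/-- Length `|α|` of a multi-index. -/
def mlen {n : ℕ} (α : Fin n → ℕ) : ℕ := ∑ i, α i

/-- A vector field acting on a function: `(Xf)(x) = Df(x)[X(x)]`. -/
noncomputable def vf {n : ℕ} (X : (Fin n → ℝ) → (Fin n → ℝ)) (f : (Fin n → ℝ) → ℝ) :
    (Fin n → ℝ) → ℝ :=
  fun x => fderiv ℝ f x (X x)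

/-- Iterated action `X_I f = X_{i_1}(X_{i_2}(⋯(X_{i_k} f)))`. -/
noncomputable def vfSeq {n : ℕ} (X : Fin n → (Fin n → ℝ) → (Fin n → ℝ)) :
    List (Fin n) → ((Fin n → ℝ) → ℝ) → ((Fin n → ℝ) → ℝ)
  | [], f => f
  | i :: I, f => vf (X i) (vfSeq X I f)

/-- Weight `⟨I⟩` of a finite sequence of indices. -/
def seqW {n : ℕ} (w : Fin n → ℕ) (I : List (Fin n)) : ℕ := (I.map w).sum

/-- The list `(1,…,1,2,…,2,…,n,…,n)` with `i` repeated `α i` times. -/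
def multiList {n : ℕ} (α : Fin n → ℕ) : List (Fin n) :=
  (List.finRange n).flatMap fun i => List.replicate (α i) i

/-- `X^α f = X_1^{α_1} ⋯ X_n^{α_n} f`. -/
noncomputable def vfPow {n : ℕ} (X : Fin n → (Fin n → ℝ) → (Fin n → ℝ)) (α : Fin n → ℕ)
    (f : (Fin n → ℝ) → ℝ) : (Fin n → ℝ) → ℝ :=
  vfSeq X (multiList α) f

/-- Partial derivative `∂^α f`. -/
noncomputable def pdPow {n : ℕ} (α : Fin n → ℕ) (f : (Fin n → ℝ) → ℝ) : (Fin n → ℝ) → ℝ :=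
  vfPow (fun i => fun _ => Pi.single i (1 : ℝ)) α f

/-- Lie bracket of two vector fields. -/
noncomputable def lieBk {n : ℕ} (X Y : (Fin n → ℝ) → (Fin n → ℝ)) : (Fin n → ℝ) → (Fin n → ℝ) :=
  fun x => fderiv ℝ Y x (X x) - fderiv ℝ X x (Y x)

/-- A weight sequence: non-decreasing, positive, starting at `1`. -/
structure IsWeight {n : ℕ} (w : Fin n → ℕ) : Prop where
  mono : Monotone w
  pos : ∀ i, 0 < w i
  first : ∀ h : 0 < n, w ⟨0, h⟩ = 1

/-- An `H`-frame on `V`. -/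
structure IsHFrame {n : ℕ} (w : Fin n → ℕ) (X : Fin n → (Fin n → ℝ) → (Fin n → ℝ))
    (V : Set (Fin n → ℝ)) : Prop where
  smooth : ∀ j, ContDiffOn ℝ (⊤ : ℕ∞) (X j) V
  basis : ∀ x ∈ V, LinearIndependent ℝ fun j => X j x
  bracket : ∃ L : Fin n → Fin n → Fin n → (Fin n → ℝ) → ℝ,
    (∀ i j k, ContDiffOn ℝ (⊤ : ℕ∞) (L i j k) V) ∧
    (∀ i j k, ¬ w k ≤ w i + w j → ∀ x ∈ V, L i j k x = 0) ∧
    ∀ i j, ∀ x ∈ V, lieBk (X i) (X j) x = ∑ k, L i j k x • X k x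

/-- `f` has order `≥ N` at `a` with respect to the frame `X`. -/
def OrderGe {n : ℕ} (w : Fin n → ℕ) (X : Fin n → (Fin n → ℝ) → (Fin n → ℝ))
    (f : (Fin n → ℝ) → ℝ) (a : Fin n → ℝ) (N : ℕ) : Prop :=
  ∀ I : List (Fin n), seqW w I < N → vfSeq X I f a = 0

/-- `f` has order exactly `N` at `a` with respect to the frame `X`. -/
def OrderEq {n : ℕ} (w : Fin n → ℕ) (X : Fin n → (Fin n → ℝ) → (Fin n → ℝ))
    (f : (Fin n → ℝ) → ℝ) (a : Fin n → ℝ) (N : ℕ) : Prop :=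
  OrderGe w X f a N ∧ ∃ I : List (Fin n), seqW w I = N ∧ vfSeq X I f a ≠ 0

/-- `f` has weight `≥ N`. -/
def WeightGe {n : ℕ} (w : Fin n → ℕ) (f : (Fin n → ℝ) → ℝ) (N : ℤ) : Prop :=
  ∀ α : Fin n → ℕ, (wlen w α : ℤ) < N → pdPow α f 0 = 0

/-- `f` has weight exactly `N`. -/
def WeightEq {n : ℕ} (w : Fin n → ℕ) (f : (Fin n → ℝ) → ℝ) (N : ℤ) : Prop :=
  WeightGe w f N ∧ ∃ α : Fin n → ℕ, (wlen w α : ℤ) = N ∧ pdPow α f 0 ≠ 0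

/-- A pseudo-norm for the anisotropic dilations. -/
structure IsPseudoNorm {n : ℕ} (w : Fin n → ℕ) (ρ : (Fin n → ℝ) → ℝ) : Prop where
  cont : Continuous ρ
  nonneg : ∀ x, 0 ≤ ρ x
  pos : ∀ x, x ≠ 0 → 0 < ρ x
  homog : ∀ t x, ρ (dil w t x) = |t| * ρ x

/-- Multi-indices with all entries `< B`. -/
def mIdx (n B : ℕ) : Finset (Fin n → ℕ) := Fintype.piFinset fun _ => Finset.range B

/-- The monomial `x^α`. -/
def monom {n : ℕ} (α : Fin n → ℕ) (x : Fin n → ℝ) : ℝ := ∏ i, x i ^ α i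

/-- Taylor coefficient `(1/α!) ∂^α f(0)`. -/
noncomputable def taylorCoeff {n : ℕ} (α : Fin n → ℕ) (f : (Fin n → ℝ) → ℝ) : ℝ :=
  ((∏ i, Nat.factorial (α i) : ℕ) : ℝ)⁻¹ * pdPow α f 0

/-- The homogeneous part `f^[ℓ]` of degree `ℓ` of the Taylor series of `f` at `0`. -/
noncomputable def homPart {n : ℕ} (w : Fin n → ℕ) (f : (Fin n → ℝ) → ℝ) (ℓ : ℕ) :
    (Fin n → ℝ) → ℝ :=
  fun x => ∑ α ∈ (mIdx n (ℓ + 1)).filter (fun α => wlen w α = ℓ),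
    taylorCoeff α f * monom α x

/-- `u_t = O(t^m)` in `C^∞(U)` as `t → 0`. -/
def BigOC {n : ℕ} (U : Set (Fin n → ℝ)) (u : ℝ → (Fin n → ℝ) → ℝ) (m : ℤ) : Prop :=
  ∀ K : Set (Fin n → ℝ), K ⊆ U → IsCompact K → ∀ β : Fin n → ℕ,
    ∃ C : ℝ, ∀ᶠ t in 𝓝[≠] (0 : ℝ), ∀ x ∈ K, |pdPow β (u t) x| ≤ C * |t| ^ m

/-- Componentwise `O(t^m)` in `C^∞(U)` for families of vector fields. -/
def BigOCVF {n : ℕ} (U : Set (Fin n → ℝ)) (u : ℝ → (Fin n → ℝ) → Fin n → ℝ)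
    (m : ℤ) : Prop :=
  ∀ K : Set (Fin n → ℝ), K ⊆ U → IsCompact K → ∀ β : Fin n → ℕ, ∀ k : Fin n,
    ∃ C : ℝ, ∀ᶠ t in 𝓝[≠] (0 : ℝ), ∀ x ∈ K,
      |pdPow β (fun y => u t y k) x| ≤ C * |t| ^ m

/-- `Θ = O_w(‖x‖^{w+m})` near `x = 0`. -/
def IsOw {n : ℕ} (w : Fin n → ℕ) (ρ : (Fin n → ℝ) → ℝ)
    (Θ : (Fin n → ℝ) → (Fin n → ℝ)) (m : ℤ) : Prop :=
  ∀ k, ∃ C : ℝ, ∀ᶠ x in 𝓝 (0 : Fin n → ℝ), |Θ x k| ≤ C * ρ x ^ ((w k : ℤ) + m)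

/-- A `w`-homogeneous map. -/
def WHomog {n : ℕ} (w : Fin n → ℕ) (φ : (Fin n → ℝ) → (Fin n → ℝ)) : Prop :=
  ∀ t x, φ (dil w t x) = dil w t (φ x)

/-- A map whose components are polynomial functions. -/
def IsPolyMap {n : ℕ} (φ : (Fin n → ℝ) → (Fin n → ℝ)) : Prop :=
  ∀ k, ∃ p : MvPolynomial (Fin n) ℝ, ∀ x, φ x k = MvPolynomial.eval x p

/-- A vector field homogeneous of degree `m`: `δ_t^* Y = t^m Y` for `t ≠ 0`. -/
def VFHomog {n : ℕ} (w : Fin n → ℕ) (Y : (Fin n → ℝ) → (Fin n → ℝ)) (m : ℤ) : Prop :=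
  ∀ t : ℝ, t ≠ 0 → ∀ x k, (t : ℝ) ^ (-(w k : ℤ)) * Y (dil w t x) k = t ^ m * Y x k

/-- A vector field has weight `W`: each component `X_k` has weight `≥ W + w_k`,
with equality for some `k`. -/
def VFWeightEq {n : ℕ} (w : Fin n → ℕ) (X : (Fin n → ℝ) → (Fin n → ℝ)) (W : ℤ) :
    Prop :=
  (∀ k, ∀ α : Fin n → ℕ, (wlen w α : ℤ) < W + w k →
    pdPow α (fun y => X y k) 0 = 0) ∧
  ∃ k, ∃ α : Fin n → ℕ, (wlen w α : ℤ) = W + w k ∧ pdPow α (fun y => X y k) 0 ≠ 0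

/-- The homogeneous part `X^[ℓ]` of degree `ℓ` of a vector field. -/
noncomputable def vfPart {n : ℕ} (w : Fin n → ℕ) (X : (Fin n → ℝ) → (Fin n → ℝ)) (ℓ : ℤ) :
    (Fin n → ℝ) → Fin n → ℝ :=
  fun x k => ∑ α ∈ (mIdx n ((ℓ + w k).toNat + 1)).filter
      (fun α => (wlen w α : ℤ) = ℓ + w k),
    taylorCoeff α (fun y => X y k) * monom α x

/-- `φ` produces privileged coordinates at `a` adapted to the `H`-frame `X`:
it is linearly adapted at `a` and each component has order `w_k` at `a`. -/
def PrivilegedAt {n : ℕ} (w : Fin n → ℕ) (X : Fin n → (Fin n → ℝ) → (Fin n → ℝ))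
    (a : Fin n → ℝ) (φ : (Fin n → ℝ) → (Fin n → ℝ)) : Prop :=
  (∀ j, fderiv ℝ φ a (X j a) = Pi.single j 1) ∧
  ∀ k, OrderEq w X (fun x => φ x k) a (w k)


/-! ### Auxiliary machinery for `order_eq_weight` -/

open scoped ContDiff

section AuxInfra

variable {n : ℕ} {V : Set (Fin n → ℝ)} {Y : Fin n → (Fin n → ℝ) → (Fin n → ℝ)}
  {g h : (Fin n → ℝ) → ℝ} {w : Fin n → ℕ}

local notation "Sm" => ContDiffOn ℝ (∞ : WithTop ℕ∞)

lemma seqW_cons (w : Fin n → ℕ) (i : Fin n) (I : List (Fin n)) :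
    seqW w (i :: I) = w i + seqW w I := by simp [seqW]

lemma seqW_append (w : Fin n → ℕ) (A B : List (Fin n)) :
    seqW w (A ++ B) = seqW w A + seqW w B := by simp [seqW]

lemma seqW_singleton (w : Fin n → ℕ) (k : Fin n) : seqW w [k] = w k := by simp [seqW]

lemma vfSeq_append (A B : List (Fin n)) (g : (Fin n → ℝ) → ℝ) :
    vfSeq Y (A ++ B) g = vfSeq Y A (vfSeq Y B g) := by
  induction A with
  | nil => rfl
  | cons i A ih => simp [vfSeq, ih]

lemma diffAt_of_smOn (hV : IsOpen V) (hg : Sm g V) {x : Fin n → ℝ} (hx : x ∈ V) :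
    DifferentiableAt ℝ g x :=
  (hg.differentiableOn (by simp)).differentiableAt (hV.mem_nhds hx)

lemma vf_smooth (hV : IsOpen V) {Z : (Fin n → ℝ) → (Fin n → ℝ)} (hZ : Sm Z V)
    (hg : Sm g V) : Sm (vf Z g) V :=
  (hg.fderiv_of_isOpen hV (le_of_eq rfl)).clm_apply hZ

lemma vfSeq_smooth (hV : IsOpen V) (hY : ∀ j, Sm (Y j) V) (I : List (Fin n))
    (hg : Sm g V) : Sm (vfSeq Y I g) V := by
  induction I with
  | nil => exact hg
  | cons i I ih => exact vf_smooth hV (hY i) ih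

lemma vf_congr (hV : IsOpen V) {Z : (Fin n → ℝ) → (Fin n → ℝ)} {g₁ g₂ : (Fin n → ℝ) → ℝ}
    (h : ∀ y ∈ V, g₁ y = g₂ y) {x : Fin n → ℝ} (hx : x ∈ V) :
    vf Z g₁ x = vf Z g₂ x := by
  unfold vf
  rw [Filter.EventuallyEq.fderiv_eq (Filter.eventuallyEq_of_mem (hV.mem_nhds hx) h)]

lemma vfSeq_congr (hV : IsOpen V) {g₁ g₂ : (Fin n → ℝ) → ℝ} (I : List (Fin n))
    (h : ∀ y ∈ V, g₁ y = g₂ y) : ∀ x ∈ V, vfSeq Y I g₁ x = vfSeq Y I g₂ x := by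
  induction I with
  | nil => exact h
  | cons i I ih => exact fun x hx => vf_congr hV ih hx

lemma vf_add {Z : (Fin n → ℝ) → (Fin n → ℝ)} {x : Fin n → ℝ}
    (hg : DifferentiableAt ℝ g x) (hh : DifferentiableAt ℝ h x) :
    vf Z (fun y => g y + h y) x = vf Z g x + vf Z h x := by
  unfold vf; rw [fderiv_fun_add hg hh]; rfl

lemma vf_sub {Z : (Fin n → ℝ) → (Fin n → ℝ)} {x : Fin n → ℝ}
    (hg : DifferentiableAt ℝ g x) (hh : DifferentiableAt ℝ h x) :
    vf Z (fun y => g y - h y) x = vf Z g x - vf Z h x := by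
  unfold vf; rw [fderiv_fun_sub hg hh]; rfl

lemma vf_mul {Z : (Fin n → ℝ) → (Fin n → ℝ)} {x : Fin n → ℝ}
    (hg : DifferentiableAt ℝ g x) (hh : DifferentiableAt ℝ h x) :
    vf Z (fun y => g y * h y) x = vf Z g x * h x + g x * vf Z h x := by
  unfold vf; rw [fderiv_fun_mul hg hh]; simp [smul_eq_mul]; ring

lemma vf_sum {Z : (Fin n → ℝ) → (Fin n → ℝ)} {x : Fin n → ℝ} {A : Fin n → (Fin n → ℝ) → ℝ}
    (hA : ∀ k, DifferentiableAt ℝ (A k) x) :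
    vf Z (fun y => ∑ k, A k y) x = ∑ k, vf Z (A k) x := by
  unfold vf; rw [fderiv_fun_sum (fun i _ => hA i)]; simp

lemma vf_const {Z : (Fin n → ℝ) → (Fin n → ℝ)} (c : ℝ) (x : Fin n → ℝ) :
    vf Z (fun _ => c) x = 0 := by
  unfold vf; rw [fderiv_fun_const]; rfl

lemma vfSeq_const (i : Fin n) (I : List (Fin n)) (c : ℝ) :
    vfSeq Y (i :: I) (fun _ => c) = fun _ => (0 : ℝ) := by
  induction I generalizing i with
  | nil => funext x; exact vf_const c x
  | cons j I ih =>
      show vf (Y i) (vfSeq Y (j :: I) fun _ => c) = _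
      rw [ih j]; funext x; exact vf_const 0 x

lemma vfSeq_add (hV : IsOpen V) (hY : ∀ j, Sm (Y j) V) (I : List (Fin n)) :
    ∀ g h : (Fin n → ℝ) → ℝ, Sm g V → Sm h V →
    ∀ x ∈ V, vfSeq Y I (fun y => g y + h y) x = vfSeq Y I g x + vfSeq Y I h x := by
  induction I with
  | nil => intro g h _ _ x _; rfl
  | cons i I ih =>
      intro g h hg hh x hx
      have h1 : vf (Y i) (vfSeq Y I (fun y => g y + h y)) x
          = vf (Y i) (fun y => vfSeq Y I g y + vfSeq Y I h y) x :=
        vf_congr hV (ih g h hg hh) hx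
      have h2 := vf_add (Z := Y i) (x := x)
        (diffAt_of_smOn hV (vfSeq_smooth hV hY I hg) hx)
        (diffAt_of_smOn hV (vfSeq_smooth hV hY I hh) hx)
      exact h1.trans h2

lemma vfSeq_sub (hV : IsOpen V) (hY : ∀ j, Sm (Y j) V) (I : List (Fin n)) :
    ∀ g h : (Fin n → ℝ) → ℝ, Sm g V → Sm h V →
    ∀ x ∈ V, vfSeq Y I (fun y => g y - h y) x = vfSeq Y I g x - vfSeq Y I h x := by
  induction I with
  | nil => intro g h _ _ x _; rfl
  | cons i I ih =>
      intro g h hg hh x hx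
      have h1 : vf (Y i) (vfSeq Y I (fun y => g y - h y)) x
          = vf (Y i) (fun y => vfSeq Y I g y - vfSeq Y I h y) x :=
        vf_congr hV (ih g h hg hh) hx
      have h2 := vf_sub (Z := Y i) (x := x)
        (diffAt_of_smOn hV (vfSeq_smooth hV hY I hg) hx)
        (diffAt_of_smOn hV (vfSeq_smooth hV hY I hh) hx)
      exact h1.trans h2

lemma vfSeq_sum (hV : IsOpen V) (hY : ∀ j, Sm (Y j) V) (I : List (Fin n)) :
    ∀ A : Fin n → (Fin n → ℝ) → ℝ, (∀ k, Sm (A k) V) →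
    ∀ x ∈ V, vfSeq Y I (fun y => ∑ k, A k y) x = ∑ k, vfSeq Y I (A k) x := by
  induction I with
  | nil => intro A _ x _; rfl
  | cons i I ih =>
      intro A hA x hx
      have h1 : vf (Y i) (vfSeq Y I (fun y => ∑ k, A k y)) x
          = vf (Y i) (fun y => ∑ k, vfSeq Y I (A k) y) x :=
        vf_congr hV (ih A hA) hx
      have h2 := vf_sum (Z := Y i) (x := x) (A := fun k => vfSeq Y I (A k))
        (fun k => diffAt_of_smOn hV (vfSeq_smooth hV hY I (hA k)) hx)
      exact h1.trans h2

end AuxInfra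

/-- The constant coordinate frame. -/
noncomputable abbrev cf (n : ℕ) : Fin n → (Fin n → ℝ) → (Fin n → ℝ) :=
  fun i _ => Pi.single i 1

/-- Abbreviation: partial derivative in direction `k`. -/
noncomputable def pd {n : ℕ} (k : Fin n) : ((Fin n → ℝ) → ℝ) → ((Fin n → ℝ) → ℝ) :=
  vf (fun _ => Pi.single k 1)

/-- Iterated partial derivatives along a list. -/
noncomputable def pdL {n : ℕ} (L : List (Fin n)) (g : (Fin n → ℝ) → ℝ) :
    (Fin n → ℝ) → ℝ := vfSeq (cf n) L g

/-- order `≥ m` (with `m : ℤ`) at `0` with respect to the frame `Y`. -/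
def OGe {n : ℕ} (w : Fin n → ℕ) (Y : Fin n → (Fin n → ℝ) → (Fin n → ℝ))
    (g : (Fin n → ℝ) → ℝ) (m : ℤ) : Prop :=
  ∀ I : List (Fin n), (seqW w I : ℤ) < m → vfSeq Y I g 0 = 0

section AuxPd

variable {n : ℕ} {V : Set (Fin n → ℝ)} {g h : (Fin n → ℝ) → ℝ} {w : Fin n → ℕ}

local notation "Sm" => ContDiffOn ℝ (∞ : WithTop ℕ∞)

lemma pd_def (k : Fin n) (g : (Fin n → ℝ) → ℝ) (x : Fin n → ℝ) :
    pd k g x = fderiv ℝ g x (Pi.single k 1) := rfl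

lemma vf_expand (Z : (Fin n → ℝ) → (Fin n → ℝ)) (g : (Fin n → ℝ) → ℝ) (x : Fin n → ℝ) :
    vf Z g x = ∑ k, Z x k * pd k g x := by
  have hx : Z x = ∑ k, (Z x k) • (Pi.single k (1:ℝ) : Fin n → ℝ) := by
    conv_lhs => rw [← Finset.univ_sum_single (Z x)]
    refine Finset.sum_congr rfl fun k _ => ?_
    rw [← Pi.single_smul, smul_eq_mul, mul_one]
  unfold vf
  conv_lhs => rw [hx]
  rw [map_sum]
  refine Finset.sum_congr rfl fun k _ => ?_
  rw [(fderiv ℝ g x).map_smul, smul_eq_mul]; rfl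

lemma pd_swap (hV : IsOpen V) (hg : Sm g V) {x : Fin n → ℝ} (hx : x ∈ V) (i j : Fin n) :
    pd i (pd j g) x = pd j (pd i g) x := by
  have hf'sm : Sm (fderiv ℝ g) V := hg.fderiv_of_isOpen hV (le_of_eq rfl)
  have hf'd : DifferentiableAt ℝ (fderiv ℝ g) x :=
    (hf'sm.differentiableOn (by simp)).differentiableAt (hV.mem_nhds hx)
  have hev : ∀ᶠ y in nhds x, HasFDerivAt g (fderiv ℝ g y) y := by
    filter_upwards [hV.mem_nhds hx] with y hy
    exact ((hg.differentiableOn (by simp)).differentiableAt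
      (hV.mem_nhds hy)).hasFDerivAt
  have hsym := second_derivative_symmetric_of_eventually hev hf'd.hasFDerivAt
  have key : ∀ a b : Fin n,
      pd a (pd b g) x = fderiv ℝ (fderiv ℝ g) x (Pi.single a 1) (Pi.single b 1) := by
    intro a b
    have hrw : pd b g = fun y => (fderiv ℝ g y) (Pi.single b 1) := rfl
    rw [pd_def, hrw,
      fderiv_clm_apply hf'd (differentiableAt_const (Pi.single b (1:ℝ)))]
    simp
  rw [key i j, key j i, hsym]

lemma pdL_smooth (hV : IsOpen V) (L : List (Fin n)) (hg : Sm g V) : Sm (pdL L g) V :=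
  vfSeq_smooth hV (fun _ => contDiffOn_const) L hg

lemma pdL_perm (hV : IsOpen V) (hg : Sm g V) {L₁ L₂ : List (Fin n)} (hp : L₁.Perm L₂) :
    ∀ x ∈ V, pdL L₁ g x = pdL L₂ g x := by
  induction hp with
  | nil => intro x _; rfl
  | cons a _ ih => intro x hx; exact vf_congr hV ih hx
  | swap a b l =>
      intro x hx
      exact pd_swap hV (pdL_smooth hV l hg) hx b a
  | trans _ _ ih1 ih2 => intro x hx; exact (ih1 x hx).trans (ih2 x hx)

end AuxPd

section AuxOrd

variable {n : ℕ} {V : Set (Fin n → ℝ)} {Y : Fin n → (Fin n → ℝ) → (Fin n → ℝ)}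
  {g h : (Fin n → ℝ) → ℝ} {w : Fin n → ℕ}

local notation "Sm" => ContDiffOn ℝ (∞ : WithTop ℕ∞)

lemma OGe_mono {m m' : ℤ} (hmm : m' ≤ m) (hg : OGe w Y g m) : OGe w Y g m' :=
  fun I hI => hg I (lt_of_lt_of_le hI hmm)

lemma OGe_nonpos {m : ℤ} (hm : m ≤ 0) : OGe w Y g m :=
  fun I hI => absurd hI (by have : (0:ℤ) ≤ (seqW w I : ℤ) := Int.natCast_nonneg _; omega)

lemma OGe_max {a b : ℤ} (ha : OGe w Y g a) (hb : OGe w Y g b) : OGe w Y g (max a b) := by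
  intro I hI
  rcases max_cases a b with ⟨he, _⟩ | ⟨he, _⟩
  · exact ha I (he ▸ hI)
  · exact hb I (he ▸ hI)

lemma OGe_vf (k : Fin n) {m : ℤ} (hg : OGe w Y g m) :
    OGe w Y (vf (Y k) g) (m - w k) := by
  intro I hI
  have h1 : vfSeq Y I (vf (Y k) g) = vfSeq Y (I ++ [k]) g := by
    rw [vfSeq_append]; rfl
  rw [h1]
  apply hg
  rw [seqW_append, seqW_singleton]
  push_cast
  omega

lemma OGe_mul_aux (hV : IsOpen V) (h0 : (0 : Fin n → ℝ) ∈ V) (hY : ∀ j, Sm (Y j) V) :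
    ∀ I : List (Fin n), ∀ (g h : (Fin n → ℝ) → ℝ) (p q : ℤ), Sm g V → Sm h V →
      OGe w Y g p → OGe w Y h q → (seqW w I : ℤ) < p + q →
      vfSeq Y I (fun y => g y * h y) 0 = 0 := by
  intro I
  induction I using List.reverseRecOn with
  | nil =>
      intro g h p q _ _ hp hq hI
      show g 0 * h 0 = 0
      simp only [seqW, List.map_nil, List.sum_nil, Nat.cast_zero] at hI
      rcases lt_or_ge (0:ℤ) p with h' | h'
      · have hg0 : g 0 = 0 := hp [] (by simpa [seqW] using h')
        rw [hg0, zero_mul]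
      · have hh0 : h 0 = 0 :=
          hq [] (by simp only [seqW, List.map_nil, List.sum_nil, Nat.cast_zero]; omega)
        rw [hh0, mul_zero]
  | append_singleton I k ih =>
      intro g h p q hg hh hp hq hI
      rw [vfSeq_append]
      have e0 : vfSeq Y [k] (fun y => g y * h y) = vf (Y k) (fun y => g y * h y) := rfl
      rw [e0]
      have e1 : ∀ x ∈ V, vf (Y k) (fun y => g y * h y) x
          = (fun y => vf (Y k) g y * h y + g y * vf (Y k) h y) x := fun x hx =>
        vf_mul (diffAt_of_smOn hV hg hx) (diffAt_of_smOn hV hh hx)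
      rw [vfSeq_congr hV
        (g₂ := fun y => vf (Y k) g y * h y + g y * vf (Y k) h y) I e1 0 h0]
      rw [vfSeq_add hV hY I (fun y => vf (Y k) g y * h y) (fun y => g y * vf (Y k) h y)
        ((vf_smooth hV (hY k) hg).mul hh) (hg.mul (vf_smooth hV (hY k) hh)) 0 h0]
      have harith : (seqW w I : ℤ) + w k < p + q := by
        rw [seqW_append, seqW_singleton] at hI; push_cast at hI; omega
      have t1 := ih (vf (Y k) g) h (p - w k) q (vf_smooth hV (hY k) hg) hh
        (OGe_vf k hp) hq (by omega)
      have t2 := ih g (vf (Y k) h) p (q - w k) hg (vf_smooth hV (hY k) hh)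
        hp (OGe_vf k hq) (by omega)
      rw [t1, t2, add_zero]

lemma OGe_mul (hV : IsOpen V) (h0 : (0 : Fin n → ℝ) ∈ V) (hY : ∀ j, Sm (Y j) V)
    {p q : ℤ} (hg : Sm g V) (hh : Sm h V) (hp : OGe w Y g p) (hq : OGe w Y h q) :
    OGe w Y (fun y => g y * h y) (p + q) :=
  fun I hI => OGe_mul_aux hV h0 hY I g h p q hg hh hp hq hI

end AuxOrd

/-- Bundle of standing hypotheses. -/
structure Setting {n : ℕ} (w : Fin n → ℕ) (X : Fin n → (Fin n → ℝ) → (Fin n → ℝ))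
    (V : Set (Fin n → ℝ)) : Prop where
  hV : IsOpen V
  h0 : (0 : Fin n → ℝ) ∈ V
  hpos : ∀ i, 0 < w i
  hXs : ∀ j, ContDiffOn ℝ (∞ : WithTop ℕ∞) (X j) V
  hX0 : ∀ j, X j 0 = Pi.single j 1
  hpriv : ∀ k, OGe w X (fun x : Fin n → ℝ => x k) (w k)

section Main

variable {n : ℕ} {w : Fin n → ℕ} {X : Fin n → (Fin n → ℝ) → (Fin n → ℝ)}
  {V : Set (Fin n → ℝ)} {g f : (Fin n → ℝ) → ℝ}

local notation "Sm" => ContDiffOn ℝ (∞ : WithTop ℕ∞)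

lemma smXc (S : Setting w X V) (j k : Fin n) : Sm (fun x => X j x k) V :=
  (ContinuousLinearMap.proj (R := ℝ) (φ := fun _ : Fin n => ℝ) k).contDiff.comp_contDiffOn
    (S.hXs j)

lemma vf_coord (Z : (Fin n → ℝ) → (Fin n → ℝ)) (k : Fin n) :
    vf Z (fun y => y k) = fun x => Z x k := by
  funext x
  unfold vf
  rw [show (fun y : Fin n → ℝ => y k)
    = ⇑(ContinuousLinearMap.proj (R := ℝ) (φ := fun _ : Fin n => ℝ) k) from rfl,
    ContinuousLinearMap.fderiv]
  rfl

lemma ordXc (S : Setting w X V) (j k : Fin n) :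
    OGe w X (fun x => X j x k) ((w k : ℤ) - w j) := by
  intro I hI
  have h1 : vfSeq X I (fun x => X j x k) = vfSeq X (I ++ [j]) (fun y => y k) := by
    rw [vfSeq_append, ← vf_coord (X j) k]; rfl
  rw [h1]
  apply S.hpriv k
  rw [seqW_append, seqW_singleton]
  push_cast
  omega

lemma ordEc (S : Setting w X V) (k k' : Fin n) :
    OGe w X (fun y => X k y k' - (if k' = k then 1 else 0))
      (max ((w k' : ℤ) - w k) 1) := by
  intro I hI
  cases I with
  | nil =>
      show X k 0 k' - _ = 0
      rw [S.hX0 k]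
      simp [Pi.single_apply]
  | cons i I' =>
      have hp := S.hpos i
      have h1 : (1:ℤ) ≤ (seqW w (i :: I') : ℤ) := by
        rw [seqW_cons]; push_cast; omega
      have h2 : (seqW w (i :: I') : ℤ) < (w k' : ℤ) - w k := by
        rcases max_cases ((w k' : ℤ) - w k) 1 with ⟨he, _⟩ | ⟨he, _⟩ <;> omega
      have h3 := vfSeq_sub S.hV S.hXs (i :: I') (fun y => X k y k')
        (fun _ => (if k' = k then (1:ℝ) else 0)) (smXc S k k') contDiffOn_const 0 S.h0
      rw [h3, ordXc S k k' (i :: I') h2, vfSeq_const i I' _]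
      simp

/-- The crucial recursion: a function of order `≥ N` has all weighted partial
derivatives of weighted order `< N` vanishing at `0` (carried out with a
coefficient function of known order). -/
lemma key (S : Setting w X V) (W : ℕ) (hW : ∀ k, w k ≤ W)
    (hf : Sm f V) {N : ℕ} (hN : OGe w X f (N : ℤ)) :
    ∀ M : ℕ, ∀ (J L : List (Fin n)) (c : (Fin n → ℝ) → ℝ) (μ : ℤ), Sm c V → OGe w X c μ →
      (L.length * (W + 1) + ((seqW w J : ℤ) + 1 - μ).toNat ≤ M) →
      ((seqW w J : ℤ) + (seqW w L : ℤ) - μ < (N : ℤ)) →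
      vfSeq X J (fun y => c y * pdL L f y) 0 = 0 := by
  intro M
  induction M using Nat.strong_induction_on with
  | _ M IH =>
  intro J L c μ hc hcord hM hq
  by_cases hbase : (seqW w J : ℤ) < μ
  · exact OGe_mul_aux S.hV S.h0 S.hXs J c (pdL L f) μ 0 hc
      (pdL_smooth S.hV L hf) hcord (OGe_nonpos le_rfl)
      (by simp only [seqW] at hbase ⊢; omega)
  · cases L with
    | nil =>
        have hq' : (seqW w J : ℤ) < μ + N := by
          simp only [seqW, List.map_nil, List.sum_nil, Nat.cast_zero] at hq ⊢; omega
        exact OGe_mul_aux S.hV S.h0 S.hXs J c f μ N hc hf hcord hN hq'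
    | cons k L' =>
        have hμJ : μ ≤ (seqW w J : ℤ) := not_lt.1 hbase
        set u : (Fin n → ℝ) → ℝ := pdL L' f with hu_def
        have hu : Sm u V := pdL_smooth S.hV L' hf
        set E : Fin n → (Fin n → ℝ) → ℝ :=
          fun k' y => X k y k' - (if k' = k then 1 else 0) with hE
        have smE : ∀ k', Sm (E k') V := fun k' => (smXc S k k').sub contDiffOn_const
        -- the pointwise rewriting identity on V
        have hid : ∀ x ∈ V, (fun y => c y * pdL (k :: L') f y) x
            = (fun y => (vf (X k) (fun z => c z * u z) y - vf (X k) c y * u y)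
                - ∑ k', (c y * E k' y) * pd k' u y) x := by
          intro x hx
          have hdc := diffAt_of_smOn S.hV hc hx
          have hdu := diffAt_of_smOn S.hV hu hx
          have hmul := vf_mul (Z := X k) (x := x) hdc hdu
          have hexp := vf_expand (X k) u x
          have hsum : ∑ k', (c x * E k' x) * pd k' u x
              = c x * ((∑ k', X k x k' * pd k' u x) - pd k u x) := by
            have e1 : ∀ k' : Fin n, (c x * E k' x) * pd k' u x
                = c x * (X k x k' * pd k' u x)
                  - c x * ((if k' = k then 1 else 0) * pd k' u x) := by
              intro k'; simp only [hE]; ring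
            rw [Finset.sum_congr rfl fun k' _ => e1 k', Finset.sum_sub_distrib,
              ← Finset.mul_sum, ← Finset.mul_sum]
            have e2 : ∑ k', (if k' = k then (1:ℝ) else 0) * pd k' u x = pd k u x := by
              rw [Finset.sum_congr rfl
                (fun k' _ => show (if k' = k then (1:ℝ) else 0) * pd k' u x
                  = if k' = k then pd k' u x else 0 by split <;> simp)]
              simp [Finset.sum_ite_eq']
            rw [e2]
            ring
          show c x * pd k u x = _
          simp only []
          rw [hmul, hexp, hsum]
          ring
        have h1 := vfSeq_congr (Y := X) S.hV
          (g₁ := fun y => c y * pdL (k :: L') f y)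
          (g₂ := fun y => (vf (X k) (fun z => c z * u z) y - vf (X k) c y * u y)
              - ∑ k', (c y * E k' y) * pd k' u y) J hid 0 S.h0
        rw [h1]
        -- smoothness of the pieces
        have sB : Sm (vf (X k) (fun z => c z * u z)) V :=
          vf_smooth S.hV (S.hXs k) (hc.mul hu)
        have sC : Sm (fun y => vf (X k) c y * u y) V :=
          (vf_smooth S.hV (S.hXs k) hc).mul hu
        have sD : ∀ k', Sm (fun y => (c y * E k' y) * pd k' u y) V :=
          fun k' => (hc.mul (smE k')).mul
            (vf_smooth S.hV contDiffOn_const hu)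
        have sBC : Sm (fun y => vf (X k) (fun z => c z * u z) y - vf (X k) c y * u y) V :=
          sB.sub ((vf_smooth S.hV (S.hXs k) hc).mul hu)
        have sS : Sm (fun y => ∑ k', (c y * E k' y) * pd k' u y) V := by
          apply ContDiffOn.sum
          intro k' _
          exact sD k'
        rw [vfSeq_sub S.hV S.hXs J
          (fun y => vf (X k) (fun z => c z * u z) y - vf (X k) c y * u y)
          (fun y => ∑ k', (c y * E k' y) * pd k' u y) sBC sS 0 S.h0]
        rw [vfSeq_sub S.hV S.hXs J
          (fun y => vf (X k) (fun z => c z * u z) y) (fun y => vf (X k) c y * u y)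
          sB sC 0 S.h0]
        rw [vfSeq_sum S.hV S.hXs J
          (fun k' y => (c y * E k' y) * pd k' u y) sD 0 S.h0]
        -- arithmetic preliminaries
        have hWk := hW k
        have hlen : (k :: L').length * (W + 1) = L'.length * (W + 1) + (W + 1) := by
          simp [List.length_cons]; ring
        rw [hlen] at hM
        have hqc : (seqW w J : ℤ) + (↑(w k) + (seqW w L' : ℤ)) - μ < (N : ℤ) := by
          rw [seqW_cons] at hq; push_cast at hq; omega
        -- term 1
        have t1 : vfSeq X J (fun y => vf (X k) (fun z => c z * u z) y) 0 = 0 := by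
          have e : vfSeq X J (fun y => vf (X k) (fun z => c z * u z) y)
              = vfSeq X (J ++ [k]) (fun z => c z * pdL L' f z) := by
            rw [vfSeq_append]; rfl
          rw [e]
          refine IH (M - 1) (by omega) (J ++ [k]) L' c μ hc hcord ?_ ?_
          · rw [seqW_append, seqW_singleton]
            push_cast
            omega
          · rw [seqW_append, seqW_singleton]
            push_cast
            omega
        -- term 2
        have t2 : vfSeq X J (fun y => vf (X k) c y * u y) 0 = 0 := by
          refine IH (M - 1) (by omega) J L' (vf (X k) c) (μ - w k)
            (vf_smooth S.hV (S.hXs k) hc) (OGe_vf k hcord) ?_ ?_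
          · push_cast
            omega
          · push_cast
            omega
        -- term 3
        have t3 : ∀ k', vfSeq X J (fun y => (c y * E k' y) * pd k' u y) 0 = 0 := by
          intro k'
          have hm1 : ((w k' : ℤ) - w k) ≤ max ((w k' : ℤ) - w k) 1 := le_max_left _ _
          have hm2 : (1:ℤ) ≤ max ((w k' : ℤ) - w k) 1 := le_max_right _ _
          have hcE : OGe w X (fun y => c y * E k' y)
              (μ + max ((w k' : ℤ) - w k) 1) :=
            OGe_mul S.hV S.h0 S.hXs hc (smE k') hcord (ordEc S k k')
          have hlen' : (k' :: L').length * (W + 1) = L'.length * (W + 1) + (W + 1) := by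
            simp [List.length_cons]; ring
          refine IH (M - 1) (by omega) J (k' :: L') (fun y => c y * E k' y)
            (μ + max ((w k' : ℤ) - w k) 1) (hc.mul (smE k')) hcE ?_ ?_
          · rw [hlen']
            omega
          · rw [seqW_cons]
            push_cast
            omega
        rw [t1, t2]
        simp only [sub_zero, zero_sub, neg_eq_zero]
        exact Finset.sum_eq_zero fun k' _ => t3 k'

end Main

section Main2

variable {n : ℕ} {w : Fin n → ℕ} {X : Fin n → (Fin n → ℝ) → (Fin n → ℝ)}
  {V : Set (Fin n → ℝ)} {g f : (Fin n → ℝ) → ℝ}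

local notation "Sm" => ContDiffOn ℝ (∞ : WithTop ℕ∞)

lemma ord_to_wt (S : Setting w X V) (hg : Sm g V) {N : ℕ} (hN : OGe w X g (N : ℤ)) :
    ∀ L : List (Fin n), (seqW w L : ℤ) < N → pdL L g 0 = 0 := by
  classical
  intro L hL
  set W : ℕ := Finset.univ.sup w with hWdef
  have hW : ∀ k, w k ≤ W := fun k => Finset.le_sup (Finset.mem_univ k)
  have h := key S W hW hg hN
    (L.length * (W + 1) + ((seqW w ([] : List (Fin n)) : ℤ) + 1 - 0).toNat)
    [] L (fun _ => (1:ℝ)) 0 contDiffOn_const (OGe_nonpos le_rfl) (le_refl _)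
    (by simp only [seqW, List.map_nil, List.sum_nil, Nat.cast_zero] at hL ⊢; omega)
  simpa [vfSeq] using h

/-- privileged coordinates: weight bound for the components of the frame. -/
lemma wtXc (S : Setting w X V) (j k : Fin n) :
    OGe w (cf n) (fun x => X j x k) ((w k : ℤ) - w j) := by
  rcases le_or_gt ((w k : ℤ) - w j) 0 with hle | hpos
  · exact OGe_nonpos hle
  · intro L hL
    have hcast : ((((w k : ℤ) - w j).toNat : ℕ) : ℤ) = (w k : ℤ) - w j :=
      Int.toNat_of_nonneg (by omega)
    exact ord_to_wt S (smXc S j k) (N := ((w k : ℤ) - w j).toNat)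
      (by rw [hcast]; exact ordXc S j k) L (by rw [hcast]; exact hL)

lemma wt_vf (S : Setting w X V) (hg : Sm g V) {m : ℤ} (hm : OGe w (cf n) g m) (j : Fin n) :
    OGe w (cf n) (vf (X j) g) (m - w j) := by
  intro L hL
  have hcf : ∀ i : Fin n, Sm (cf n i) V := fun _ => contDiffOn_const
  have hexp : ∀ x ∈ V, vf (X j) g x = (fun y => ∑ k, X j y k * pd k g y) x :=
    fun x _ => vf_expand (X j) g x
  rw [vfSeq_congr S.hV (g₂ := fun y => ∑ k, X j y k * pd k g y) L hexp 0 S.h0]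
  rw [vfSeq_sum S.hV hcf L (fun k y => X j y k * pd k g y)
    (fun k => (smXc S j k).mul (vf_smooth S.hV contDiffOn_const hg)) 0 S.h0]
  refine Finset.sum_eq_zero fun k _ => ?_
  have hpdk : OGe w (cf n) (pd k g) (m - w k) := OGe_vf (Y := cf n) k hm
  have := OGe_mul (Y := cf n) S.hV S.h0 hcf (smXc S j k)
    (vf_smooth S.hV contDiffOn_const hg) (wtXc S j k) hpdk
  exact this L (by omega)

lemma wt_vfSeq (S : Setting w X V) (hg : Sm g V) {m : ℤ} (hm : OGe w (cf n) g m) :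
    ∀ I : List (Fin n), OGe w (cf n) (vfSeq X I g) (m - seqW w I) := by
  intro I
  induction I with
  | nil => exact OGe_mono (by simp [seqW]) hm
  | cons i I ih =>
      have h1 := wt_vf S (vfSeq_smooth S.hV S.hXs I hg) ih i
      refine OGe_mono ?_ h1
      rw [seqW_cons]
      push_cast
      omega

end Main2

section MultiListLemmas

variable {n : ℕ} {w : Fin n → ℕ}

lemma count_flatMap_replicate (α : Fin n → ℕ) (j : Fin n) : ∀ l : List (Fin n),
    (l.flatMap fun i => List.replicate (α i) i).count j
      = (l.map fun i => if i = j then α i else 0).sum := by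
  intro l
  induction l with
  | nil => rfl
  | cons i l ih =>
      simp only [List.flatMap_cons, List.count_append, List.map_cons, List.sum_cons, ih]
      congr 1
      rw [List.count_replicate]
      by_cases h : i = j <;> simp [h]

lemma count_multiList (α : Fin n → ℕ) (j : Fin n) : (multiList α).count j = α j := by
  rw [multiList, count_flatMap_replicate, ← Fin.sum_univ_def]
  simp

lemma seqW_flatMap (w : Fin n → ℕ) (α : Fin n → ℕ) : ∀ l : List (Fin n),
    seqW w (l.flatMap fun i => List.replicate (α i) i)
      = (l.map fun i => α i * w i).sum := by
  intro l
  induction l with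
  | nil => rfl
  | cons i l ih =>
      simp only [List.flatMap_cons, seqW, List.map_append, List.sum_append, List.map_cons,
        List.sum_cons]
      rw [show ((List.replicate (α i) i).map w).sum = α i * w i by
        simp [List.map_replicate, List.sum_replicate, smul_eq_mul]]
      rw [show (((l.flatMap fun i => List.replicate (α i) i)).map w).sum
        = (l.map fun i => α i * w i).sum from ih]

lemma seqW_multiList (w : Fin n → ℕ) (α : Fin n → ℕ) : seqW w (multiList α) = wlen w α := by
  rw [multiList, seqW_flatMap, ← Fin.sum_univ_def, wlen]
  exact Finset.sum_congr rfl fun i _ => Nat.mul_comm _ _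

lemma wlen_count (w : Fin n → ℕ) (L : List (Fin n)) :
    wlen w (fun i => L.count i) = seqW w L := by
  induction L with
  | nil => simp [wlen, seqW]
  | cons k L ih =>
      rw [seqW]
      simp only [List.map_cons, List.sum_cons]
      rw [← seqW, ← ih, wlen, wlen]
      have hcnt : ∀ i : Fin n, (k :: L).count i = L.count i + if i = k then 1 else 0 := by
        intro i; rw [List.count_cons]
        by_cases h : i = k
        · simp [h]
        · simp [h]
          exact fun hh => h hh.symm
      simp only [hcnt, Nat.mul_add, Finset.sum_add_distrib]
      rw [Nat.add_comm]
      congr 1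
      simp [Finset.sum_ite_eq']

lemma perm_multiList (L : List (Fin n)) : (multiList (fun i => L.count i)).Perm L := by
  rw [List.perm_iff_count]
  intro a
  rw [count_multiList]

end MultiListLemmas


/-- In privileged coordinates, a function of order `N` at `0` has
weight `N`. -/
theorem order_eq_weight
    {n : ℕ} (hn : 0 < n) {w : Fin n → ℕ} (hw : IsWeight w)
    {U : Set (Fin n → ℝ)} (hU : IsOpen U) (h0 : (0 : Fin n → ℝ) ∈ U)
    {X : Fin n → (Fin n → ℝ) → (Fin n → ℝ)} (hX : IsHFrame w X U)
    (hX0 : ∀ j, X j 0 = Pi.single j 1)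
    (hpriv : ∀ k, OrderEq w X (fun x => x k) 0 (w k))
    {f : (Fin n → ℝ) → ℝ} {Uf : Set (Fin n → ℝ)}
    (hUf : Uf ∈ 𝓝 (0 : Fin n → ℝ)) (hf : ContDiffOn ℝ (⊤ : ℕ∞) f Uf)
    {N : ℕ} (hord : OrderEq w X f 0 N) :
    WeightEq w f N := by
  classical
  set V : Set (Fin n → ℝ) := U ∩ interior Uf with hVdef
  have hVopen : IsOpen V := hU.inter isOpen_interior
  have h0V : (0 : Fin n → ℝ) ∈ V := ⟨h0, mem_interior_iff_mem_nhds.2 hUf⟩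
  have hfV : ContDiffOn ℝ (∞ : WithTop ℕ∞) f V :=
    (hf.mono (Set.inter_subset_right.trans interior_subset)).of_le (by simp)
  have S : Setting w X V :=
    { hV := hVopen
      h0 := h0V
      hpos := hw.pos
      hXs := fun j => ((hX.smooth j).mono Set.inter_subset_left).of_le (by simp)
      hX0 := hX0
      hpriv := fun k I hI => (hpriv k).1 I (by exact_mod_cast hI) }
  have hordf : OGe w X f (N : ℤ) := fun I hI => hord.1 I (by exact_mod_cast hI)
  have part1 := ord_to_wt S hfV hordf
  constructor
  · intro α hα
    have hpp : pdPow α f = pdL (multiList α) f := rfl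
    rw [hpp]
    refine part1 _ ?_
    rw [seqW_multiList]
    exact hα
  · by_contra hcon
    push_neg at hcon
    have hzero : ∀ α : Fin n → ℕ, (wlen w α : ℤ) ≤ (N : ℤ) → pdPow α f 0 = 0 := by
      intro α hle
      rcases lt_or_eq_of_le hle with hlt | heq
      · have hpp : pdPow α f = pdL (multiList α) f := rfl
        rw [hpp]
        exact part1 _ (by rw [seqW_multiList]; exact hlt)
      · exact hcon α heq
    have hwge : ∀ L : List (Fin n), (seqW w L : ℤ) < (N : ℤ) + 1 → pdL L f 0 = 0 := by
      intro L hL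
      rw [show pdL L f 0 = pdL (multiList (fun i => L.count i)) f 0 from
        pdL_perm hVopen hfV (perm_multiList L).symm 0 h0V]
      have hpp : pdL (multiList (fun i => L.count i)) f 0
          = pdPow (fun i => L.count i) f 0 := rfl
      rw [hpp]
      refine hzero _ ?_
      rw [wlen_count]
      omega
    obtain ⟨I, hIw, hIne⟩ := hord.2
    apply hIne
    have h1 := wt_vfSeq S hfV (m := (N : ℤ) + 1) hwge I
    exact h1 [] (by
      rw [show seqW w ([] : List (Fin n)) = 0 from rfl, hIw]
      push_cast
      omega)


end Carnot
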